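/- Suppose A₁ → A₂ → A₃ → A₄ and B₄ → B₃ → B₂ → B₁ are exact sequences of abelian groups with compatible pairings φ_i: A_i × B_i → ℚ/ℤ (compatibility: φ_{i+1}(f_i(a), b) = φ_i(a, g_i(b))). Fix n ≥ 1. If the induced map A₁/n → ((B₁)_n)^D is surjective, the induced map A₂/n → ((B₂)_n)^D is injective, and the induced map A₄/n → ((B₄)_n)^D is injective, then the induced map on images im(A₂→A₃)/n → ((im(B₃→B₂))_n)^D is injective. -/
import Mathlib

/-- `ℚ/ℤ`. -/
abbrev QZ : Type := AddCircle (1 : ℚ)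

/-- The `n`-torsion subgroup `Bₙ = {b : B | n • b = 0}`. -/
def nTorsion (n : ℕ) (B : Type*) [AddCommGroup B] : AddSubgroup B :=
  (AddMonoidHom.mk' (fun b : B => n • b) (fun a b => smul_add n a b)).ker

lemma mem_nTorsion {n : ℕ} {B : Type*} [AddCommGroup B] {b : B} :
    b ∈ nTorsion n B ↔ n • b = 0 := Iff.rfl

/-- Key diagram-chase step ("four pairing lemma", first half): given exact sequences
`A₁ → A₂ → A₃ → A₄` and `B₄ → B₃ → B₂ → B₁` with compatible pairings
`φᵢ : Aᵢ × Bᵢ → ℚ/ℤ`, if `A₁/n → ((B₁)ₙ)^D` is surjective and `A₂/n → ((B₂)ₙ)^D` and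
`A₄/n → ((B₄)ₙ)^D` are injective, then the induced map
`im(f₂)/n → ((im g₂)ₙ)^D` is injective; i.e. any `x ∈ im f₂ ⊆ A₃` pairing to zero
with every `n`-torsion element of `im g₂ ⊆ B₂` lies in `n · im f₂`. -/
theorem image_pairing_injective
    {A₁ A₂ A₃ A₄ B₁ B₂ B₃ B₄ : Type*}
    [AddCommGroup A₁] [AddCommGroup A₂] [AddCommGroup A₃] [AddCommGroup A₄]
    [AddCommGroup B₁] [AddCommGroup B₂] [AddCommGroup B₃] [AddCommGroup B₄]
    (n : ℕ) (hn : 0 < n)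
    (f₁ : A₁ →+ A₂) (f₂ : A₂ →+ A₃) (f₃ : A₃ →+ A₄)
    (g₁ : B₂ →+ B₁) (g₂ : B₃ →+ B₂) (g₃ : B₄ →+ B₃)
    (hexA₂ : f₁.range = f₂.ker) (hexA₃ : f₂.range = f₃.ker)
    (hexB₃ : g₃.range = g₂.ker) (hexB₂ : g₂.range = g₁.ker)
    (φ₁ : A₁ →+ B₁ →+ QZ) (φ₂ : A₂ →+ B₂ →+ QZ) (φ₃ : A₃ →+ B₃ →+ QZ)
    (φ₄ : A₄ →+ B₄ →+ QZ)
    (hcomp₁ : ∀ (a : A₁) (b : B₂), φ₂ (f₁ a) b = φ₁ a (g₁ b))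
    (hcomp₂ : ∀ (a : A₂) (b : B₃), φ₃ (f₂ a) b = φ₂ a (g₂ b))
    (hcomp₃ : ∀ (a : A₃) (b : B₄), φ₄ (f₃ a) b = φ₃ a (g₃ b))
    -- `A₁/n → ((B₁)ₙ)^D` is surjective:
    (h₁ : ∀ ψ : nTorsion n B₁ →+ QZ,
      ∃ a : A₁, ∀ b : nTorsion n B₁, ψ b = φ₁ a b.1)
    -- `A₂/n → ((B₂)ₙ)^D` is injective:
    (h₂ : ∀ a : A₂, (∀ b : B₂, n • b = 0 → φ₂ a b = 0) → ∃ a', a = n • a')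
    -- `A₄/n → ((B₄)ₙ)^D` is injective:
    (h₄ : ∀ a : A₄, (∀ b : B₄, n • b = 0 → φ₄ a b = 0) → ∃ a', a = n • a') :
    ∀ x ∈ f₂.range,
      (∀ b₃ : B₃, n • (g₂ b₃) = 0 → φ₃ x b₃ = 0) →
        ∃ y ∈ f₂.range, x = n • y := by
  rintro x ⟨a, rfl⟩ hx
  -- the restriction of `g₁` to torsion subgroups
  let T : nTorsion n B₂ →+ nTorsion n B₁ :=
    ((g₁.comp (nTorsion n B₂).subtype).codRestrict (nTorsion n B₁)
      (fun b => by
        rw [mem_nTorsion]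
        show n • g₁ b.1 = 0
        rw [← map_nsmul, mem_nTorsion.mp b.2, map_zero]))
  -- the functional `b₂ ↦ φ₂ a b₂` on `(B₂)ₙ`
  let χ : nTorsion n B₂ →+ QZ := (φ₂ a).comp (nTorsion n B₂).subtype
  have hTχ : ∀ b : nTorsion n B₂, T b = ⟨g₁ b.1, (T b).2⟩ := fun b => rfl
  have hker : T.ker ≤ χ.ker := by
    intro b hb
    have hb' : g₁ b.1 = 0 := congrArg Subtype.val (AddMonoidHom.mem_ker.mp hb)
    have : b.1 ∈ g₁.ker := AddMonoidHom.mem_ker.mpr hb'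
    rw [← hexB₂] at this
    obtain ⟨b₃, hb₃⟩ := this
    have : χ b = φ₂ a (g₂ b₃) := by simp [χ, hb₃]
    rw [AddMonoidHom.mem_ker, this, ← hcomp₂]
    exact hx b₃ (by rw [hb₃]; exact mem_nTorsion.mp b.2)
  -- descend `χ` to the range of `T`
  let q : (nTorsion n B₂ ⧸ T.ker) →+ QZ := QuotientAddGroup.lift T.ker χ hker
  let e := QuotientAddGroup.quotientKerEquivRange T
  let ψ₀ : T.range →+ QZ := q.comp e.symm.toAddMonoidHom
  have hψ₀ : ∀ b : nTorsion n B₂, ψ₀ ⟨T b, ⟨b, rfl⟩⟩ = χ b := by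
    intro b
    have he : e ((b : nTorsion n B₂ ⧸ T.ker)) = ⟨T b, ⟨b, rfl⟩⟩ := rfl
    have : e.symm ⟨T b, ⟨b, rfl⟩⟩ = (b : nTorsion n B₂ ⧸ T.ker) := by
      rw [← he, AddEquiv.symm_apply_apply]
    simp only [ψ₀, AddMonoidHom.comp_apply, AddEquiv.coe_toAddMonoidHom, this]
    rfl
  -- extend `ψ₀` to all of `(B₁)ₙ` using divisibility of `ℚ/ℤ`
  obtain ⟨ψ, hψ⟩ := (Module.Baer.of_divisible QZ).extension_property_addMonoidHom
    T.range.subtype Subtype.val_injective ψ₀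
  -- lift `ψ` to `a₁ : A₁`
  obtain ⟨a₁, ha₁⟩ := h₁ ψ
  -- now `a - f₁ a₁` pairs to zero with all of `(B₂)ₙ`
  obtain ⟨a', ha'⟩ := h₂ (a - f₁ a₁) (by
    intro b₂ hb₂
    set b : nTorsion n B₂ := ⟨b₂, mem_nTorsion.mpr hb₂⟩
    have key : φ₁ a₁ (g₁ b₂) = φ₂ a b₂ := by
      have h1 : ψ (T b) = φ₁ a₁ (T b).1 := ha₁ (T b)
      have h2 : ψ (T.range.subtype ⟨T b, ⟨b, rfl⟩⟩) = ψ₀ ⟨T b, ⟨b, rfl⟩⟩ :=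
        DFunLike.congr_fun hψ _
      have h3 : T.range.subtype ⟨T b, ⟨b, rfl⟩⟩ = T b := rfl
      have h4 : (T b).1 = g₁ b₂ := rfl
      rw [h3] at h2
      rw [h2, hψ₀ b] at h1
      have h5 : χ b = φ₂ a b₂ := rfl
      rw [h5, h4] at h1
      exact h1.symm
    rw [map_sub, AddMonoidHom.sub_apply, hcomp₁, key, sub_self])
  refine ⟨f₂ a', ⟨a', rfl⟩, ?_⟩
  have hfa₁ : f₂ (f₁ a₁) = 0 := by
    have : f₁ a₁ ∈ f₂.ker := hexA₂ ▸ ⟨a₁, rfl⟩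
    exact AddMonoidHom.mem_ker.mp this
  calc f₂ a = f₂ (a - f₁ a₁) + f₂ (f₁ a₁) := by rw [← map_add, sub_add_cancel]
    _ = f₂ (n • a') := by rw [hfa₁, add_zero, ha']
    _ = n • f₂ a' := map_nsmul f₂ n a'
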